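/- arXiv:2605.22124 — 7 statements merged into one kernel-verified Lean document; each statement's English description precedes it below -/
import Mathlib

section
/- Let f(η) = −log(1−|η|) − |η| for η ∈ (−1,1). Then for every real x, the supremum over η ∈ (−1,1) of η·x − f(η) equals |x| − log(|x|+1). -/
/-!
Writing `t = |η|`, we have `η * x - f η ≤ t * |x| + log (1 - t) + t`, with equality when `η` has
the sign of `x`. Applying `log y ≤ y - 1` to `y = (1 - t) * (|x| + 1)` bounds the right-hand side by
`|x| - log (|x| + 1)`, and `y = 1`, i.e. `η = x / (|x| + 1)`, attains the bound.
-/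

open Real

lemma mul_add_log_one_sub_add_le {t a : ℝ} (ht : t < 1) (ha : -1 < a) :
    t * a + log (1 - t) + t ≤ a - log (a + 1) := by
  have key := log_le_sub_one_of_pos (mul_pos (sub_pos.2 ht) (neg_lt_iff_pos_add.1 ha))
  rw [log_mul (by linarith) (by linarith)] at key
  linarith

lemma div_add_one_mul_add_log_one_sub_add {a : ℝ} (ha : -1 < a) :
    a / (a + 1) * a + log (1 - a / (a + 1)) + a / (a + 1) = a - log (a + 1) := by
  have ha' : a + 1 ≠ 0 := by linarith
  rw [one_sub_div ha', add_sub_cancel_left, one_div, log_inv]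
  field_simp
  ring

/-- The Fenchel conjugate of `f(η) = −log(1−|η|) − |η|` over `η ∈ (−1,1)`:
for every real `x`, `sup_{−1<η<1} (η·x − f(η)) = |x| − log(|x|+1)`. -/
theorem fenchel_conjugate_log_barrier (x : ℝ) :
    sSup ((fun η : ℝ => η * x - (-Real.log (1 - |η|) - |η|)) '' Set.Ioo (-1 : ℝ) 1)
      = |x| - Real.log (|x| + 1) := by
  have hx : -1 < |x| := by linarith [abs_nonneg x]
  have hx₁ : 0 < |x| + 1 := by linarith
  set η₀ := x / (|x| + 1)
  have habs : |η₀| = |x| / (|x| + 1) := by rw [abs_div, abs_of_pos hx₁]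
  have hη₀ : |η₀| < 1 := by rw [habs, div_lt_one hx₁]; linarith
  refine IsGreatest.csSup_eq ⟨⟨η₀, abs_lt.1 hη₀, ?_⟩, ?_⟩
  · have hmul : η₀ * x = |η₀| * |x| := by
      rw [habs, div_mul_eq_mul_div, div_mul_eq_mul_div, ← abs_mul_abs_self x]
    simp only [hmul, habs, ← div_add_one_mul_add_log_one_sub_add hx]
    ring
  · rintro _ ⟨η, hη, rfl⟩
    have hmul : η * x ≤ |η| * |x| := (le_abs_self _).trans_eq (abs_mul η x)
    have := mul_add_log_one_sub_add_le (abs_lt.2 hη) hx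
    dsimp only
    linarith
end

section
/- Let Ψ(x) = x − log(1+x) for x ≥ 0. For all x ≥ 0 and y ≥ 0, if Ψ(x) ≤ y then x ≤ y + log(1 + y + √(2y)). -/
/-!
Ψ is strictly increasing on `[0,∞)`, so it suffices to show `Ψ(z) ≥ y` for
`z = y + log(1 + y + s)`, `s = √(2y)`. Since `1 + y + s = 1 + s + s²/2 ≤ eˢ`, the
logarithm is at most `s`, hence `log(1 + z) ≤ log(1 + y + s) = z - y`.
-/

open Real Set

noncomputable def psi (x : ℝ) : ℝ := x - log (1 + x)

lemma psi_strictMonoOn : StrictMonoOn psi (Ici 0) := by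
  intro a (ha : 0 ≤ a) b _ hab
  have ha1 : 0 < 1 + a := by linarith
  have hratio : (1 + b) / (1 + a) ≠ 1 := by
    rw [Ne, div_eq_one_iff_eq ha1.ne']
    linarith
  have hlog : log (1 + b) - log (1 + a) < (b - a) / (1 + a) := by
    rw [← log_div (by linarith) ha1.ne']
    calc log ((1 + b) / (1 + a)) < (1 + b) / (1 + a) - 1 :=
          log_lt_sub_one_of_pos (div_pos (by linarith) ha1) hratio
      _ = (b - a) / (1 + a) := by field_simp; ring
  have hdiv : (b - a) / (1 + a) ≤ b - a := div_le_self (by linarith) (by linarith)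
  unfold psi
  linarith

lemma log_one_add_add_sq_div_two_le {s : ℝ} (hs : 0 ≤ s) : log (1 + s + s ^ 2 / 2) ≤ s :=
  (log_le_iff_le_exp (by positivity)).2 (quadratic_le_exp_of_nonneg hs)

lemma le_psi_add_log_one_add_add_sqrt {y : ℝ} (hy : 0 ≤ y) :
    y ≤ psi (y + log (1 + y + √(2 * y))) := by
  set s := √(2 * y)
  have hs : 0 ≤ s := sqrt_nonneg _
  have hsq : s ^ 2 / 2 = y := by rw [sq_sqrt (by linarith)]; ring
  have hLs : log (1 + y + s) ≤ s := by
    simpa only [hsq, add_right_comm] using log_one_add_add_sq_div_two_le hs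
  have hL : 0 ≤ log (1 + y + s) := log_nonneg (by linarith)
  have hlog : log (1 + (y + log (1 + y + s))) ≤ log (1 + y + s) :=
    log_le_log (by linarith) (by linarith)
  unfold psi
  linarith

/-- For `Ψ(x) = x − log(1+x)` on `[0,∞)`: if `x, y ≥ 0` and `Ψ(x) ≤ y` then
`x ≤ y + log(1 + y + √(2y))`. -/
theorem psi_inverse_bound (x y : ℝ) (hx : 0 ≤ x) (hy : 0 ≤ y)
    (h : x - Real.log (1 + x) ≤ y) :
    x ≤ y + Real.log (1 + y + Real.sqrt (2 * y)) := by
  have hz : 0 ≤ y + log (1 + y + √(2 * y)) :=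
    add_nonneg hy (log_nonneg (by linarith [sqrt_nonneg (2 * y)]))
  exact (psi_strictMonoOn.le_iff_le hx hz).1 (h.trans (le_psi_add_log_one_add_add_sqrt hy))
end

section
/- Let Ψ(x) = x − log(1+x) for x ≥ 0. For all x ≥ 0 and y ≥ 0, if Ψ(x) ≤ y then x ≤ 2y + √(2y). -/
/-! With `u = log (1 + x) ≥ 0` we have `1 + x = exp u ≥ 1 + u + u² / 2`, so `u² ≤ 2 Ψ(x)`.
Hence `x = Ψ(x) + u ≤ Ψ(x) + √(2 Ψ(x))`, and the right-hand side is monotone in `Ψ(x)`. -/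

open Real

lemma sq_log_one_add_le_two_mul_sub_log {x : ℝ} (hx : 0 ≤ x) :
    log (1 + x) ^ 2 ≤ 2 * (x - log (1 + x)) := by
  have hu : 0 ≤ log (1 + x) := log_nonneg (by linarith)
  have hexp : exp (log (1 + x)) = 1 + x := exp_log (by linarith)
  have := quadratic_le_exp_of_nonneg hu
  linarith

lemma le_sub_log_one_add_add_sqrt {x : ℝ} (hx : 0 ≤ x) :
    x ≤ (x - log (1 + x)) + √(2 * (x - log (1 + x))) := by
  have := le_sqrt_of_sq_le (sq_log_one_add_le_two_mul_sub_log hx)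
  linarith

theorem psi_inverse_bound_simple_general (x y : ℝ) (hx : 0 ≤ x)
    (h : x - Real.log (1 + x) ≤ y) :
    x ≤ 2 * y + Real.sqrt (2 * y) := by
  have hψ : 0 ≤ x - log (1 + x) := by
    linarith [sq_log_one_add_le_two_mul_sub_log hx, sq_nonneg (log (1 + x))]
  calc x ≤ (x - log (1 + x)) + √(2 * (x - log (1 + x))) := le_sub_log_one_add_add_sqrt hx
    _ ≤ y + √(2 * y) := by gcongr
    _ ≤ 2 * y + √(2 * y) := by linarith

/-- For `Ψ(x) = x − log(1+x)` on `[0,∞)`: if `x, y ≥ 0` and `Ψ(x) ≤ y` then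
`x ≤ 2y + √(2y)`. -/
theorem psi_inverse_bound_simple (x y : ℝ) (hx : 0 ≤ x) (hy : 0 ≤ y)
    (h : x - Real.log (1 + x) ≤ y) :
    x ≤ 2 * y + Real.sqrt (2 * y) :=
  psi_inverse_bound_simple_general x y hx h
end

section
/- For all real β with |β| < 1 and all real x with |x| ≤ 1, one has log(1 + βx) ≥ βx + x²·(log(1−|β|) + |β|). -/
/-!
Write `-log (1 - t) - t = ∑_{n ≥ 2} tⁿ / n`. All coefficients are nonnegative, so the sum only
grows when `t` is replaced by `|t|`, and for `|c| ≤ 1`, `s ≥ 0` each term `(c s)ⁿ / n` with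
`n ≥ 2` is at most `c² sⁿ / n`. Apply both comparisons to `t = -β x`, `c = |x|`, `s = |β|`.
-/

namespace Real

theorem hasSum_pow_add_two_div_neg_log_one_sub_sub {t : ℝ} (ht : |t| < 1) :
    HasSum (fun n : ℕ => t ^ (n + 2) / (n + 2)) (-log (1 - t) - t) := by
  have h := (hasSum_nat_add_iff' 1).mpr (hasSum_pow_div_log_of_abs_lt_one ht)
  simpa only [Finset.sum_range_one, Nat.cast_add, Nat.cast_one, Nat.cast_zero, zero_add, pow_one,
    div_one, add_assoc, one_add_one_eq_two] using h

theorem neg_log_one_sub_sub_le_abs {t : ℝ} (ht : |t| < 1) :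
    -log (1 - t) - t ≤ -log (1 - |t|) - |t| := by
  refine hasSum_le (fun n => ?_) (hasSum_pow_add_two_div_neg_log_one_sub_sub ht)
    (hasSum_pow_add_two_div_neg_log_one_sub_sub (by rwa [abs_abs]))
  refine div_le_div_of_nonneg_right ?_ (by positivity)
  rw [← abs_pow]
  exact le_abs_self _

theorem neg_log_one_sub_mul_sub_le {c s : ℝ} (hc : |c| ≤ 1) (hs₀ : 0 ≤ s) (hs₁ : s < 1) :
    -log (1 - c * s) - c * s ≤ c ^ 2 * (-log (1 - s) - s) := by
  have hs : |s| < 1 := by rwa [abs_of_nonneg hs₀]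
  have hcs : |c * s| < 1 := by
    rw [abs_mul]
    exact lt_of_le_of_lt (mul_le_of_le_one_left (abs_nonneg s) hc) hs
  refine hasSum_le (fun n => ?_) (hasSum_pow_add_two_div_neg_log_one_sub_sub hcs)
    ((hasSum_pow_add_two_div_neg_log_one_sub_sub hs).mul_left (c ^ 2))
  rw [← mul_div_assoc]
  gcongr
  calc (c * s) ^ (n + 2) ≤ |c| ^ (n + 2) * s ^ (n + 2) := by
        rw [mul_pow, ← abs_pow]
        gcongr
        exact le_abs_self _
    _ ≤ |c| ^ 2 * s ^ (n + 2) :=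
        mul_le_mul_of_nonneg_right (pow_le_pow_of_le_one (abs_nonneg c) hc (by omega))
          (by positivity)
    _ = c ^ 2 * s ^ (n + 2) := by rw [sq_abs]

end Real

/-- For all `β` with `|β| < 1` and all `x` with `|x| ≤ 1`,
`log(1 + βx) ≥ βx + x²·(log(1−|β|) + |β|)`. -/
theorem log_one_add_mul_ge (β x : ℝ) (hβ : |β| < 1) (hx : |x| ≤ 1) :
    Real.log (1 + β * x) ≥ β * x + x ^ 2 * (Real.log (1 - |β|) + |β|) := by
  have hβx : |-(β * x)| < 1 := by
    rw [abs_neg, abs_mul]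
    exact lt_of_le_of_lt (mul_le_of_le_one_right (abs_nonneg β) hx) hβ
  have h₁ := Real.neg_log_one_sub_sub_le_abs hβx
  have h₂ := Real.neg_log_one_sub_mul_sub_le (c := |x|) (by rwa [abs_abs]) (abs_nonneg β) hβ
  rw [abs_neg, abs_mul, mul_comm |β|, sub_neg_eq_add, sub_neg_eq_add] at h₁
  rw [sq_abs] at h₂
  linarith
end

section
/- Fix b ∈ [0,1). The function x ↦ (log(1 − x·b) + x·b)/x is nonincreasing on (0,1]. -/
/-! `x ↦ log (1 - x * b)` is concave and vanishes at `0`, so its chord slopes from the origin,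
`log (1 - x * b) / x`, decrease in `x`; the function in question is this slope plus `b`. -/

open Real Set

theorem ConcaveOn.antitoneOn_div_self {𝕜 : Type*} [Field 𝕜] [LinearOrder 𝕜] [IsStrictOrderedRing 𝕜]
    {s : Set 𝕜} {f : 𝕜 → 𝕜} (hf : ConcaveOn 𝕜 s f) (h0 : (0 : 𝕜) ∈ s) (hf0 : f 0 = 0) :
    AntitoneOn (fun x => f x / x) {x | x ∈ s ∧ 0 < x} :=
  (hf.antitoneOn_slope_gt h0).congr fun x _ => by simp [slope_def_field, hf0]

theorem concaveOn_log_one_sub_mul (b : ℝ) :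
    ConcaveOn ℝ {x | 0 < 1 - x * b} fun x => log (1 - x * b) := by
  have hg : ∀ x, AffineMap.lineMap (1 : ℝ) (1 - b) x = 1 - x * b := fun x => by
    rw [AffineMap.lineMap_apply_ring]; ring
  convert strictConcaveOn_log_Ioi.concaveOn.comp_affineMap (AffineMap.lineMap (1 : ℝ) (1 - b))
    using 1 <;> ext x <;> simp only [mem_ofPred_eq, mem_preimage, mem_Ioi, Function.comp_apply, hg]

/-- For fixed `b ∈ [0,1)`, the function `x ↦ (log(1 − x·b) + x·b)/x` is nonincreasing
on `(0,1]`. -/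
theorem antitoneOn_scaled_log_wealth (b : ℝ) (hb : b ∈ Set.Ico (0 : ℝ) 1) :
    AntitoneOn (fun x : ℝ => (Real.log (1 - x * b) + x * b) / x) (Set.Ioc (0 : ℝ) 1) := by
  have hslope := (concaveOn_log_one_sub_mul b).antitoneOn_div_self (by simp) (by simp)
  have hsub : Ioc (0 : ℝ) 1 ⊆ {x | 0 < 1 - x * b ∧ 0 < x} := fun x ⟨hx0, hx1⟩ =>
    ⟨by nlinarith [hb.1, hb.2], hx0⟩
  refine ((hslope.mono hsub).add_const b).congr fun x ⟨hx0, _⟩ => ?_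
  simp only [add_div, mul_div_cancel_left₀ b hx0.ne']
end

section
/- Fix γ > 1 and α ∈ (0,1), and let P_γ be the probability measure on [−1,1] with density β ↦ (log γ)/(2|β|·(log(|β|/γ))²). Let t ≥ 1 and g_1,…,g_t ∈ ℝ with |g_i| ≤ 1 for all i and Σ_{i=1}^t g_i ≠ 0. Set S = Σ_{i=1}^t g_i², V = |Σ_{i=1}^t g_i|, and β̂ = V/(V+S). Then ∫ ∏_{i=1}^t (1+β g_i) dP_γ(β) ≥ exp( α·Ψ(V/S)·S − log( (log γ + log(1/(α β̂)))² / (0.5·log γ·log(1/α)) ) ), where Ψ(x) = x − log(1+x). -/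
/-!
For `|β| < 1` and `|x| ≤ 1` one has `log (1 + β x) ≥ β x + x² (log (1 - |β|) + |β|)`, so at a
fixed bet `β` of the sign of `∑ gᵢ` the wealth `∏ (1 + β gᵢ)` is at least
`exp (|β| V + S (log (1 - |β|) + |β|))`. This exponent is concave in `|β|`, vanishes at `0` and
equals `S Ψ(V/S)` at `β̂`, hence it is at least `α S Ψ(V/S)` for `|β| ∈ [α β̂, β̂]`. Keeping
only that interval in the mixture, whose `P_γ`-mass is read off the primitive
`(log γ / 2) / (log γ - log x)` of the density, and bounding this mass below by
`0.5 log γ log(1/α) / (log γ + log (1/(α β̂)))²` gives the theorem.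
-/

open MeasureTheory Real Set Filter Topology

theorem hasSum_pow_div_neg_log_one_sub_sub {y : ℝ} (hy : |y| < 1) :
    HasSum (fun n : ℕ => y ^ (n + 2) / (n + 2)) (-log (1 - y) - y) := by
  have h := (hasSum_nat_add_iff' 1).2 (hasSum_pow_div_log_of_abs_lt_one hy)
  simpa only [Finset.sum_range_one, pow_one, Nat.cast_zero, zero_add, div_one, Nat.cast_add,
    Nat.cast_one, add_assoc, one_add_one_eq_two] using h

-- Compare the series `∑ y ^ (n + 2) / (n + 2)` of `-log (1 - y) - y` termwise, using
-- `|u| ^ (n + 2) ≤ u ^ 2`.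
theorem abs_log_one_sub_mul_add_mul_le {b u : ℝ} (hb : |b| < 1) (hu : |u| ≤ 1) :
    |log (1 - b * u) + b * u| ≤ u ^ 2 * (-log (1 - |b|) - |b|) := by
  have hbu : |b * u| < 1 := by
    rw [abs_mul]; nlinarith [abs_nonneg b, abs_nonneg u]
  have hb' := hasSum_pow_div_neg_log_one_sub_sub (y := |b|) (by rwa [abs_abs])
  have h := (hasSum_pow_div_neg_log_one_sub_sub hbu).norm_le_of_bounded (hb'.mul_left (u ^ 2))
    fun n => by
      calc ‖(b * u) ^ (n + 2) / (n + 2)‖ = |u| ^ n * u ^ 2 * (|b| ^ (n + 2) / (n + 2)) := by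
            rw [norm_div, norm_pow, Real.norm_eq_abs, abs_mul, mul_pow, ← sq_abs u]
            norm_cast; ring
        _ ≤ 1 * u ^ 2 * (|b| ^ (n + 2) / (n + 2)) := by
            gcongr; exact pow_le_one₀ (abs_nonneg u) hu
        _ = u ^ 2 * (|b| ^ (n + 2) / (n + 2)) := by ring
  rwa [Real.norm_eq_abs, ← abs_neg, neg_sub, sub_neg_eq_add, add_comm] at h

-- The inequality of Fan, Grama and Liu.
theorem mul_add_sq_mul_le_log_one_add_mul {b u : ℝ} (hb : |b| < 1) (hu : |u| ≤ 1) :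
    b * u + u ^ 2 * (log (1 - |b|) + |b|) ≤ log (1 + b * u) := by
  have h := abs_le.1 (abs_log_one_sub_mul_add_mul_le (b := -b) (by rwa [abs_neg]) hu)
  rw [abs_neg, neg_mul, sub_neg_eq_add] at h
  linarith [h.1]

theorem exp_le_prod_one_add_mul {ι : Type*} (s : Finset ι) (g : ι → ℝ)
    (hg : ∀ i ∈ s, |g i| ≤ 1) {β : ℝ} (hβ : |β| < 1) :
    exp (β * ∑ i ∈ s, g i + (∑ i ∈ s, g i ^ 2) * (log (1 - |β|) + |β|))
      ≤ ∏ i ∈ s, (1 + β * g i) := by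
  rw [Finset.mul_sum, Finset.sum_mul, ← Finset.sum_add_distrib, exp_sum]
  refine Finset.prod_le_prod (fun _ _ => (exp_pos _).le) fun i hi => ?_
  have hβg : |β * g i| < 1 := by
    rw [abs_mul]; nlinarith [abs_nonneg β, abs_nonneg (g i), hg i hi]
  rw [← le_log_iff_exp_le (by linarith [(abs_lt.1 hβg).1])]
  exact mul_add_sq_mul_le_log_one_add_mul hβ (hg i hi)

theorem prod_one_add_mul_nonneg {ι : Type*} {s : Finset ι} {g : ι → ℝ}
    (hg : ∀ i ∈ s, |g i| ≤ 1) {β : ℝ} (hβ : |β| ≤ 1) : 0 ≤ ∏ i ∈ s, (1 + β * g i) := by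
  refine Finset.prod_nonneg fun i hi => ?_
  have h : |β * g i| ≤ 1 := by
    rw [abs_mul]; exact mul_le_one₀ hβ (abs_nonneg _) (hg i hi)
  linarith [(abs_le.1 h).1]

theorem div_mul_log_one_sub_le {b c : ℝ} (hb : 0 ≤ b) (hbc : b ≤ c) (hc : c < 1) :
    b / c * log (1 - c) ≤ log (1 - b) := by
  rcases hb.eq_or_lt with rfl | hb
  · simp
  have hc0 : 0 < c := hb.trans_le hbc
  have h := strictConcaveOn_log_Ioi.concaveOn.2 (mem_Ioi.2 (sub_pos.2 hc)) (mem_Ioi.2 one_pos)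
    (div_nonneg hb.le hc0.le) (sub_nonneg.2 ((div_le_one hc0).2 hbc)) (add_sub_cancel _ _)
  have hpt : (b / c) • (1 - c) + (1 - b / c) • (1 : ℝ) = 1 - b := by
    rw [smul_eq_mul, smul_eq_mul, mul_one, mul_sub, mul_one, div_mul_cancel₀ b hc0.ne']; ring
  rwa [hpt, log_one, smul_zero, add_zero, smul_eq_mul] at h

-- The exponent `b * (V + S) + S * log (1 - b)` is concave in `b`, vanishes at `0` and equals
-- `S * Ψ (V / S)` at `b = V / (V + S)`.
theorem mul_sub_mul_log_one_add_div_le {α b V S : ℝ} (hV : 0 < V) (hS : 0 < S) (hb0 : 0 ≤ b)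
    (hαb : α * (V / (V + S)) ≤ b) (hb : b ≤ V / (V + S)) :
    α * (V - S * log (1 + V / S)) ≤ b * V + S * (log (1 - b) + b) := by
  set c := V / (V + S)
  have hc0 : 0 < c := by positivity
  have hc1 : c < 1 := (div_lt_one (by positivity)).2 (by linarith)
  have hE : V - S * log (1 + V / S) = c * (V + S) + S * log (1 - c) := by
    have h1c : 1 - c = (1 + V / S)⁻¹ := by simp only [c]; field_simp; ring
    rw [h1c, log_inv]; simp only [c]; field_simp; ring
  have hE0 : 0 ≤ V - S * log (1 + V / S) := by
    have h := mul_le_mul_of_nonneg_left (log_le_sub_one_of_pos (by positivity : 0 < 1 + V / S))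
      hS.le
    rw [add_sub_cancel_left, mul_div_cancel₀ _ hS.ne'] at h
    linarith
  calc α * (V - S * log (1 + V / S)) ≤ b / c * (V - S * log (1 + V / S)) :=
        mul_le_mul_of_nonneg_right ((le_div_iff₀ hc0).2 hαb) hE0
    _ = b * (V + S) + S * (b / c * log (1 - c)) := by rw [hE]; field_simp
    _ ≤ b * (V + S) + S * log (1 - b) := by gcongr; exact div_mul_log_one_sub_le hb0 hb hc1
    _ = b * V + S * (log (1 - b) + b) := by ring

theorem exp_mul_sub_le_prod_one_add_mul {ι : Type*} {s : Finset ι} {g : ι → ℝ}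
    (hg : ∀ i ∈ s, |g i| ≤ 1) {α β S V : ℝ} (hS : S = ∑ i ∈ s, g i ^ 2)
    (hV : V = |∑ i ∈ s, g i|) (hS0 : 0 < S) (hV0 : 0 < V) (hαβ : α * (V / (V + S)) ≤ |β|)
    (hβ : |β| ≤ V / (V + S)) (hβg : 0 ≤ β * ∑ i ∈ s, g i) :
    exp (α * (V - S * log (1 + V / S))) ≤ ∏ i ∈ s, (1 + β * g i) := by
  have hβ1 : |β| < 1 := hβ.trans_lt ((div_lt_one (by positivity)).2 (by linarith))
  have hβV : β * ∑ i ∈ s, g i = |β| * V := by rw [hV, ← abs_mul, abs_of_nonneg hβg]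
  calc exp (α * (V - S * log (1 + V / S)))
      ≤ exp (β * ∑ i ∈ s, g i + S * (log (1 - |β|) + |β|)) := by
        rw [hβV]
        gcongr
        exact mul_sub_mul_log_one_add_div_le hV0 hS0 (abs_nonneg β) hαβ hβ
    _ ≤ ∏ i ∈ s, (1 + β * g i) := hS ▸ exp_le_prod_one_add_mul s g hg hβ1

noncomputable def priorDensity (γ β : ℝ) : ℝ := Real.log γ / (2 * |β| * (Real.log (|β| / γ)) ^ 2)

noncomputable def prior (γ : ℝ) : Measure ℝ :=
  (volume.restrict (Icc (-1 : ℝ) 1)).withDensity fun β => ENNReal.ofReal (priorDensity γ β)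

-- `priorPrimitive γ x` is the `prior γ`-mass of `(0, x]` for `x ∈ [0, 1]`. The branch at `x ≤ 0`
-- is needed for continuity at `0`, where the formula would give `1 / 2` since `log 0 = 0`.
noncomputable def priorPrimitive (γ x : ℝ) : ℝ := if x ≤ 0 then 0 else log γ / 2 / (log γ - log x)

theorem priorDensity_nonneg {γ : ℝ} (hγ : 1 ≤ γ) (β : ℝ) : 0 ≤ priorDensity γ β :=
  div_nonneg (log_nonneg hγ) (by positivity)

@[simp]
theorem priorDensity_neg (γ β : ℝ) : priorDensity γ (-β) = priorDensity γ β := by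
  simp [priorDensity]

theorem priorPrimitive_of_pos {γ x : ℝ} (hx : 0 < x) :
    priorPrimitive γ x = log γ / 2 / (log γ - log x) := if_neg hx.not_ge

theorem priorPrimitive_eventuallyEq {γ x : ℝ} (hx : 0 < x) :
    priorPrimitive γ =ᶠ[𝓝 x] fun y => log γ / 2 / (log γ - log y) := by
  filter_upwards [eventually_gt_nhds hx] with y hy using priorPrimitive_of_pos hy

theorem hasDerivAt_priorPrimitive {γ x : ℝ} (hx : 0 < x) (hxγ : x < γ) :
    HasDerivAt (priorPrimitive γ) (priorDensity γ x) x := by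
  have hD : 0 < log γ - log x := sub_pos.2 (log_lt_log hx hxγ)
  have h := (hasDerivAt_const x (log γ / 2)).div
    ((hasDerivAt_log hx.ne').const_sub (log γ)) hD.ne'
  refine (h.congr_deriv ?_).congr_of_eventuallyEq (priorPrimitive_eventuallyEq hx)
  rw [priorDensity, abs_of_pos hx, log_div hx.ne' (hx.trans hxγ).ne',
    show (log x - log γ) ^ 2 = (log γ - log x) ^ 2 by ring]
  field_simp
  ring

theorem continuousOn_priorPrimitive (γ : ℝ) : ContinuousOn (priorPrimitive γ) (Ico 0 γ) := by
  rintro x ⟨hx0, hxγ⟩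
  rcases hx0.eq_or_lt with rfl | hx0
  · refine ContinuousWithinAt.mono ?_ Ico_subset_Ici_self
    rw [← continuousWithinAt_Ioi_iff_Ici, ContinuousWithinAt, priorPrimitive, if_pos le_rfl]
    have hlog : Tendsto (fun y => log γ - log y) (𝓝[>] 0) atTop :=
      tendsto_atTop_add_const_left _ _ (tendsto_neg_atBot_atTop.comp tendsto_log_nhdsGT_zero)
    refine ((tendsto_const_nhds (x := log γ / 2)).div_atTop hlog).congr' ?_
    filter_upwards [self_mem_nhdsWithin] with y hy using (priorPrimitive_of_pos hy).symm
  · have hD : log γ - log x ≠ 0 := (sub_pos.2 (log_lt_log hx0 hxγ)).ne'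
    refine (ContinuousAt.congr ?_ (priorPrimitive_eventuallyEq hx0).symm).continuousWithinAt
    exact continuousAt_const.div (continuousAt_const.sub (continuousAt_log hx0.ne')) hD

theorem intervalIntegrable_priorDensity {γ : ℝ} (hγ : 1 < γ) :
    IntervalIntegrable (priorDensity γ) volume (-1) 1 := by
  have h01 : IntervalIntegrable (priorDensity γ) volume 0 1 := by
    refine intervalIntegral.intervalIntegrable_deriv_of_nonneg (g := priorPrimitive γ) ?_ ?_
      fun x _ => priorDensity_nonneg hγ.le x
    · rw [uIcc_of_le zero_le_one]
      exact (continuousOn_priorPrimitive γ).mono (Icc_subset_Ico_right hγ)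
    · rintro x ⟨hx0, hx1⟩
      simp only [zero_le_one, min_eq_left, max_eq_right] at hx0 hx1
      exact hasDerivAt_priorPrimitive hx0 (hx1.trans hγ)
  have h10 : IntervalIntegrable (priorDensity γ) volume (-1) 0 := by
    have h := (IntervalIntegrable.iff_comp_neg (f := priorDensity γ) (a := 0) (b := 1)).1 h01
    simpa using h.symm
  exact h10.trans h01

theorem integral_priorDensity_Icc {γ a b : ℝ} (hγ : 1 < γ) (ha : 0 < a) (hab : a ≤ b) (hb : b < 1) :
    ∫ x in Icc a b, priorDensity γ x = priorPrimitive γ b - priorPrimitive γ a := by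
  rw [integral_Icc_eq_integral_Ioc, ← intervalIntegral.integral_of_le hab]
  refine intervalIntegral.integral_eq_sub_of_hasDerivAt (fun x hx => ?_)
    ((intervalIntegrable_priorDensity hγ).mono_set (uIcc_subset_uIcc ?_ ?_))
  · rw [uIcc_of_le hab] at hx
    exact hasDerivAt_priorPrimitive (ha.trans_le hx.1) (by linarith [hx.2])
  · rw [uIcc_of_le (by norm_num)]; constructor <;> linarith
  · rw [uIcc_of_le (by norm_num)]; constructor <;> linarith

theorem integral_priorDensity_Icc_neg {γ a b : ℝ} (hγ : 1 < γ) (ha : 0 < a) (hab : a ≤ b)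
    (hb : b < 1) :
    ∫ x in Icc (-b) (-a), priorDensity γ x = priorPrimitive γ b - priorPrimitive γ a := by
  rw [integral_Icc_eq_integral_Ioc, ← intervalIntegral.integral_of_le (neg_le_neg hab),
    ← intervalIntegral.integral_comp_neg]
  simp only [priorDensity_neg]
  rw [intervalIntegral.integral_of_le hab, ← integral_Icc_eq_integral_Ioc]
  exact integral_priorDensity_Icc hγ ha hab hb

theorem integral_prior {γ : ℝ} (hγ : 1 ≤ γ) (f : ℝ → ℝ) :
    ∫ x, f x ∂prior γ = ∫ x in Icc (-1) 1, priorDensity γ x * f x := by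
  rw [prior, integral_withDensity_eq_integral_toReal_smul (by unfold priorDensity; fun_prop)
    (ae_of_all _ fun _ => ENNReal.ofReal_lt_top)]
  simp only [ENNReal.toReal_ofReal (priorDensity_nonneg hγ _), smul_eq_mul]

theorem mul_setIntegral_priorDensity_le_integral_prior {γ C : ℝ} {f : ℝ → ℝ} {J : Set ℝ}
    (hγ : 1 < γ) (hf : ContinuousOn f (Icc (-1) 1)) (hf0 : ∀ x ∈ Icc (-1) 1, 0 ≤ f x)
    (hJ : MeasurableSet J) (hJsub : J ⊆ Icc (-1) 1) (hCf : ∀ x ∈ J, C ≤ f x) :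
    C * ∫ x in J, priorDensity γ x ≤ ∫ x, f x ∂prior γ := by
  have hint : IntegrableOn (priorDensity γ) (Icc (-1) 1) :=
    (intervalIntegrable_iff_integrableOn_Icc_of_le (by norm_num)).1
      (intervalIntegrable_priorDensity hγ)
  have hintf := hint.mul_continuousOn hf isCompact_Icc
  rw [integral_prior hγ.le, ← integral_const_mul]
  calc ∫ x in J, C * priorDensity γ x ≤ ∫ x in J, priorDensity γ x * f x :=
        setIntegral_mono_on ((hint.mono_set hJsub).const_mul C) (hintf.mono_set hJsub) hJ
          fun x hx => by
            rw [mul_comm]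
            exact mul_le_mul_of_nonneg_left (hCf x hx) (priorDensity_nonneg hγ.le x)
    _ ≤ ∫ x in Icc (-1) 1, priorDensity γ x * f x :=
        setIntegral_mono_set hintf
          ((ae_restrict_iff' measurableSet_Icc).2 (ae_of_all _ fun x hx =>
            mul_nonneg (priorDensity_nonneg hγ.le x) (hf0 x hx)))
          hJsub.eventuallyLE

theorem exists_Icc_integral_priorDensity {γ a c T : ℝ} (hγ : 1 < γ) (hT : T ≠ 0) (ha : 0 < a)
    (hac : a ≤ c) (hc : c < 1) :
    ∃ J ⊆ Icc (-1 : ℝ) 1, MeasurableSet J ∧ (∀ β ∈ J, a ≤ |β| ∧ |β| ≤ c ∧ 0 ≤ β * T) ∧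
      ∫ x in J, priorDensity γ x = priorPrimitive γ c - priorPrimitive γ a := by
  rcases hT.lt_or_gt with hT | hT
  · refine ⟨Icc (-c) (-a), Icc_subset_Icc (by linarith) (by linarith), measurableSet_Icc,
      fun β hβ => ?_, integral_priorDensity_Icc_neg hγ ha hac hc⟩
    have hβ0 : β < 0 := by linarith [hβ.2]
    rw [abs_of_neg hβ0]
    exact ⟨by linarith [hβ.2], by linarith [hβ.1], (mul_pos_of_neg_of_neg hβ0 hT).le⟩
  · refine ⟨Icc a c, Icc_subset_Icc (by linarith) (by linarith), measurableSet_Icc,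
      fun β hβ => ?_, integral_priorDensity_Icc hγ ha hac hc⟩
    have hβ0 : 0 < β := ha.trans_le hβ.1
    rw [abs_of_pos hβ0]
    exact ⟨hβ.1, hβ.2, (mul_pos hβ0 hT).le⟩

theorem exp_sub_log_le_mul_priorPrimitive_sub {γ α c : ℝ} (hγ : 1 < γ) (hα : α ∈ Ioo 0 1)
    (hc : 0 < c) (hcγ : c < γ) (x : ℝ) :
    exp (x - log ((log γ + log (1 / (α * c))) ^ 2 / (0.5 * log γ * log (1 / α))))
      ≤ exp x * (priorPrimitive γ c - priorPrimitive γ (α * c)) := by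
  obtain ⟨hα0, hα1⟩ := hα
  have hL : 0 < log γ := log_pos hγ
  have hu : 0 < log (1 / α) := log_pos (one_lt_one_div hα0 hα1)
  set A := log γ - log (α * c)
  set C := log γ - log c
  have hC : 0 < C := sub_pos.2 (log_lt_log hc hcγ)
  have hAC : A = C + log (1 / α) := by
    simp only [A, C, one_div, log_inv, log_mul hα0.ne' hc.ne']; ring
  have hA : 0 < A := hAC ▸ add_pos hC hu
  have hmass :
      priorPrimitive γ c - priorPrimitive γ (α * c) = log γ / 2 * log (1 / α) / (C * A) := by
    rw [priorPrimitive_of_pos hc, priorPrimitive_of_pos (mul_pos hα0 hc)]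
    change log γ / 2 / C - log γ / 2 / A = _
    rw [div_sub_div _ _ hC.ne' hA.ne', hAC]
    ring
  have hQ : (log γ + log (1 / (α * c))) ^ 2 / (0.5 * log γ * log (1 / α))
      = A ^ 2 / (log γ / 2 * log (1 / α)) := by
    rw [one_div (α * c), log_inv]; ring
  have hN : 0 < log γ / 2 * log (1 / α) := mul_pos (half_pos hL) hu
  rw [hmass, hQ, exp_sub, exp_log (div_pos (pow_pos hA 2) hN), div_div_eq_mul_div, mul_div_assoc]
  refine mul_le_mul_of_nonneg_left (div_le_div_of_nonneg_left hN.le (mul_pos hC hA) ?_)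
    (exp_pos x).le
  rw [sq]
  exact mul_le_mul_of_nonneg_right (hAC ▸ le_add_of_nonneg_right hu.le) hA.le

theorem mixture_wealth_lower_bound_general (γ α : ℝ) (hγ : 1 < γ)
    (hα : α ∈ Set.Ioo (0 : ℝ) 1)
    (t : ℕ) (g : ℕ → ℝ) (hg : ∀ i < t, |g i| ≤ 1)
    (hsum : (∑ i ∈ Finset.range t, g i) ≠ 0)
    (S V : ℝ) (hS : S = ∑ i ∈ Finset.range t, (g i) ^ 2)
    (hV : V = |∑ i ∈ Finset.range t, g i|) :
    ∫ β, ∏ i ∈ Finset.range t, (1 + β * g i)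
        ∂((volume.restrict (Set.Icc (-1 : ℝ) 1)).withDensity
            (fun β => ENNReal.ofReal (Real.log γ / (2 * |β| * (Real.log (|β| / γ)) ^ 2))))
      ≥ Real.exp (α * (V / S - Real.log (1 + V / S)) * S
          - Real.log ((Real.log γ + Real.log (1 / (α * (V / (V + S))))) ^ 2
              / (0.5 * Real.log γ * Real.log (1 / α)))) := by
  have hg' : ∀ i ∈ Finset.range t, |g i| ≤ 1 := fun i hi => hg i (Finset.mem_range.1 hi)
  have hS0 : 0 < S := by
    obtain ⟨i, hi, hgi⟩ := Finset.exists_ne_zero_of_sum_ne_zero hsum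
    exact hS ▸ Finset.sum_pos' (fun j _ => sq_nonneg (g j)) ⟨i, hi, by positivity⟩
  have hV0 : 0 < V := hV ▸ abs_pos.2 hsum
  have hc0 : 0 < V / (V + S) := by positivity
  have hc1 : V / (V + S) < 1 := (div_lt_one (by positivity)).2 (by linarith)
  obtain ⟨J, hJsub, hJ, hJβ, hJmass⟩ := exists_Icc_integral_priorDensity hγ hsum
    (mul_pos hα.1 hc0) (mul_le_of_le_one_left hc0.le hα.2.le) hc1
  have hΨ : α * (V / S - log (1 + V / S)) * S = α * (V - S * log (1 + V / S)) := by
    field_simp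
  rw [ge_iff_le, hΨ]
  refine (exp_sub_log_le_mul_priorPrimitive_sub hγ hα hc0 (by linarith) _).trans ?_
  rw [← hJmass]
  refine mul_setIntegral_priorDensity_le_integral_prior hγ (by fun_prop)
    (fun β hβ => prod_one_add_mul_nonneg hg' (abs_le.2 hβ)) hJ hJsub fun β hβ => ?_
  obtain ⟨hαβ, hβc, hβg⟩ := hJβ β hβ
  exact exp_mul_sub_le_prod_one_add_mul hg' hS hV hS0 hV0 hαβ hβc hβg

/-- Deterministic wealth lower bound for the mixture over the prior with density
`β ↦ (log γ)/(2|β|(log(|β|/γ))²)` on `[−1,1]`: with `S = Σ gᵢ²`, `V = |Σ gᵢ|`,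
`β̂ = V/(V+S)` and `Ψ(x) = x − log(1+x)`,
`∫ ∏_{i<t}(1+β gᵢ) dP_γ(β)
  ≥ exp(α·Ψ(V/S)·S − log((log γ + log(1/(αβ̂)))²/(0.5·log γ·log(1/α))))`. -/
theorem mixture_wealth_lower_bound (γ α : ℝ) (hγ : 1 < γ)
    (hα : α ∈ Set.Ioo (0 : ℝ) 1)
    (t : ℕ) (ht : 1 ≤ t) (g : ℕ → ℝ) (hg : ∀ i < t, |g i| ≤ 1)
    (hsum : (∑ i ∈ Finset.range t, g i) ≠ 0)
    (S V : ℝ) (hS : S = ∑ i ∈ Finset.range t, (g i) ^ 2)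
    (hV : V = |∑ i ∈ Finset.range t, g i|) :
    ∫ β, ∏ i ∈ Finset.range t, (1 + β * g i)
        ∂((volume.restrict (Set.Icc (-1 : ℝ) 1)).withDensity
            (fun β => ENNReal.ofReal (Real.log γ / (2 * |β| * (Real.log (|β| / γ)) ^ 2))))
      ≥ Real.exp (α * (V / S - Real.log (1 + V / S)) * S
          - Real.log ((Real.log γ + Real.log (1 / (α * (V / (V + S))))) ^ 2
              / (0.5 * Real.log γ * Real.log (1 / α)))) :=
  mixture_wealth_lower_bound_general γ α hγ hα t g hg hsum S V hS hV
end

section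
/- Fix γ > 1, α ∈ (0,1), and δ ∈ (0,1). Let (g_t)_{t≥1} be a martingale difference sequence with |g_t| ≤ 1 almost surely. Then with probability at least 1 − δ, simultaneously for all t ≥ 1 with Σ_{i=1}^t g_i ≠ 0: α·Ψ(|Σ_{i=1}^t g_i| / S_t)·S_t ≤ log(1/δ) + log( (log γ + log(1/α) + log(1 + S_t/|Σ_{i=1}^t g_i|))² / (0.5·log γ·log(1/α)) ), where S_t = Σ_{i=1}^t g_i² and Ψ(x) = x − log(1+x). -/
open MeasureTheory

/-!
Betting the fraction `±λ` (`0 ≤ λ < 1`) of the current wealth on every increment, the inequality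
`log (1 + λ y) ≥ λ y + y² (log (1 - λ) + λ)` for `|y| ≤ 1` bounds the log-wealth after `t` rounds
below by `λ |Z| + S (log (1 - λ) + λ)`, with `Z, S` the sums of the `g_i` and `g_i²`. This bound
is concave in `λ`, vanishes at `0` and equals `S Ψ(|Z| / S)` at `λ* = |Z| / (S + |Z|)`.
The wealth is a nonnegative martingale of mean `1`, so by Ville's inequality it ever exceeds
`2 / (δ w_k)` with probability at most `δ w_k / 2`. Betting `±α^(k+1)` with the weights
`w_k = log γ log (1/α) / (log γ + (k+1) log (1/α))²`, whose sum telescopes to at most `1`, all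
wealths stay below their thresholds off an event of probability `δ`. There, for each `t`, the
grid point with `α^(k+1) < λ* ≤ α^k` is within a factor `α` of `λ*`, and
`k log (1/α) ≤ log (1 + S / |Z|)` turns `log (2 / w_k)` into the logarithmic term of the bound.
-/

open Real Finset ProbabilityTheory

lemma log_one_sub_abs_add_abs_le {z : ℝ} (hz : |z| < 1) :
    log (1 - |z|) + |z| ≤ log (1 + z) - z := by
  rcases le_or_gt z 0 with hz0 | hz0
  · rw [abs_of_nonpos hz0, sub_neg_eq_add]
    linarith
  · rw [abs_of_pos hz0] at hz ⊢
    -- `2 z` is the first term of the series of `log (1 + z) - log (1 - z)`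
    have h := le_hasSum (hasSum_log_sub_log_of_abs_lt_one (abs_lt.2 ⟨by linarith, hz⟩)) 0
      fun k _ => by positivity
    norm_num at h
    linarith

lemma neg_log_one_sub_sub_le_sq_mul {c x : ℝ} (hc0 : 0 ≤ c) (hc1 : c ≤ 1) (hx0 : 0 ≤ x)
    (hx1 : x < 1) : -log (1 - c * x) - c * x ≤ c ^ 2 * (-log (1 - x) - x) := by
  -- compare the series `∑_{n ≥ 2} xⁿ / n` termwise, using `cⁿ ≤ c²` for `n ≥ 2`
  have tail {y : ℝ} (hy0 : 0 ≤ y) (hy1 : y < 1) :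
      HasSum (fun n : ℕ => y ^ (n + 2) / (n + 2)) (-log (1 - y) - y) := by
    have h := (hasSum_nat_add_iff' 1).2
      (hasSum_pow_div_log_of_abs_lt_one (abs_lt.2 ⟨by linarith, hy1⟩))
    simp only [sum_range_one, zero_add, pow_one, Nat.cast_zero, div_one] at h
    have e (n : ℕ) : y ^ (n + 1 + 1) / ((↑(n + 1) : ℝ) + 1) = y ^ (n + 2) / (n + 2) := by
      push_cast; ring
    simpa only [e] using h
  have hcx1 : c * x < 1 := (mul_le_of_le_one_left hx0 hc1).trans_lt hx1
  refine hasSum_le (fun n => ?_) (tail (by positivity) hcx1) ((tail hx0 hx1).mul_left (c ^ 2))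
  have hcn : c ^ n ≤ 1 := pow_le_one₀ hc0 hc1
  calc (c * x) ^ (n + 2) / (n + 2) = c ^ 2 * (c ^ n * (x ^ (n + 2) / (n + 2))) := by ring
    _ ≤ c ^ 2 * (1 * (x ^ (n + 2) / (n + 2))) := by gcongr
    _ = c ^ 2 * (x ^ (n + 2) / (n + 2)) := by ring

lemma mul_add_sq_mul_le_log_one_add_mul_s17 {x y : ℝ} (hy : |y| ≤ 1) (hx0 : 0 ≤ x) (hx1 : x < 1) :
    x * y + y ^ 2 * (log (1 - x) + x) ≤ log (1 + x * y) := by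
  have habs : |x * y| = |y| * x := by rw [abs_mul, abs_of_nonneg hx0, mul_comm]
  have hxy : |x * y| < 1 := habs ▸ (mul_le_of_le_one_left hx0 hy).trans_lt hx1
  have h1 := log_one_sub_abs_add_abs_le hxy
  have h2 := neg_log_one_sub_sub_le_sq_mul (abs_nonneg y) hy hx0 hx1
  rw [habs] at h1
  rw [sq_abs] at h2
  linarith

noncomputable def logWealthBound (Z S lam : ℝ) : ℝ := lam * Z + S * (log (1 - lam) + lam)

lemma exp_logWealthBound_le_prod {ι : Type*} {s : Finset ι} {y : ι → ℝ}
    (hy : ∀ i ∈ s, |y i| ≤ 1) {x : ℝ} (hx0 : 0 ≤ x) (hx1 : x < 1) :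
    exp (logWealthBound (∑ i ∈ s, y i) (∑ i ∈ s, y i ^ 2) x) ≤ ∏ i ∈ s, (1 + x * y i) := by
  rw [logWealthBound, mul_sum, sum_mul, ← sum_add_distrib, exp_sum]
  refine prod_le_prod (fun i _ => (exp_pos _).le) fun i hi => ?_
  have hpos : 0 < 1 + x * y i := by
    have := abs_le.1 (hy i hi)
    nlinarith
  calc exp (x * y i + y i ^ 2 * (log (1 - x) + x)) ≤ exp (log (1 + x * y i)) :=
        exp_le_exp.2 (mul_add_sq_mul_le_log_one_add_mul_s17 (hy i hi) hx0 hx1)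
    _ = 1 + x * y i := exp_log hpos

lemma mul_logWealthBound_le {Z S c L : ℝ} (hS : 0 ≤ S) (hL : L < 1) (hc0 : 0 ≤ c)
    (hc1 : c ≤ 1) : c * logWealthBound Z S L ≤ logWealthBound Z S (c * L) := by
  have hconc : c * log (1 - L) ≤ log (1 - c * L) := by
    have h := strictConcaveOn_log_Ioi.concaveOn.2 (Set.mem_Ioi.2 one_pos)
      (Set.mem_Ioi.2 (sub_pos.2 hL)) (sub_nonneg.2 hc1) hc0 (by ring)
    simp only [smul_eq_mul, log_one, mul_zero, zero_add, mul_one] at h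
    exact h.trans_eq (congrArg log (by ring))
  simp only [logWealthBound]
  nlinarith

lemma logWealthBound_div_add_self {Z S : ℝ} (hS : 0 < S) (hZ : 0 ≤ Z) :
    logWealthBound Z S (Z / (S + Z)) = (Z / S - log (1 + Z / S)) * S := by
  have hlog : log (1 - Z / (S + Z)) = -log (1 + Z / S) := by
    rw [← log_inv]; congr 1; field_simp; ring
  rw [logWealthBound, hlog]
  field_simp
  ring

lemma mul_psi_mul_le_logWealthBound {α S Z lam : ℝ} (hα : 0 ≤ α) (hS : 0 < S) (hZ : 0 < Z)
    (hlo : α * (Z / (S + Z)) ≤ lam) (hhi : lam ≤ Z / (S + Z)) :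
    α * (Z / S - log (1 + Z / S)) * S ≤ logWealthBound Z S lam := by
  have hL : 0 < Z / (S + Z) := by positivity
  have hψ : 0 ≤ Z / S - log (1 + Z / S) := by
    linarith [log_le_sub_one_of_pos (show 0 < 1 + Z / S by positivity)]
  have hc : α ≤ lam / (Z / (S + Z)) := (le_div_iff₀ hL).2 hlo
  have h := mul_logWealthBound_le (Z := Z) (L := Z / (S + Z)) hS.le
    ((div_lt_one (by linarith)).2 (by linarith)) (hα.trans hc) ((div_le_one hL).2 hhi)
  rw [div_mul_cancel₀ _ hL.ne', logWealthBound_div_add_self hS hZ.le] at h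
  calc α * (Z / S - log (1 + Z / S)) * S
      ≤ lam / (Z / (S + Z)) * ((Z / S - log (1 + Z / S)) * S) := by
        rw [mul_assoc]; gcongr
    _ ≤ _ := h

noncomputable def gridWeight (a b : ℝ) (k : ℕ) : ℝ := a * b / (a + (k + 1) * b) ^ 2

lemma gridWeight_pos {a b : ℝ} (ha : 0 < a) (hb : 0 < b) (k : ℕ) : 0 < gridWeight a b k := by
  unfold gridWeight; positivity

lemma sum_range_gridWeight_le_one {a b : ℝ} (ha : 0 < a) (hb : 0 < b) (n : ℕ) :
    ∑ k ∈ range n, gridWeight a b k ≤ 1 := by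
  set u : ℕ → ℝ := fun k => a / (a + k * b)
  have telescope (k : ℕ) : gridWeight a b k ≤ u k - u (k + 1) := by
    have hk : (0 : ℝ) < a + k * b := by positivity
    have hdiff : u k - u (k + 1) = a * b / ((a + k * b) * (a + (k + 1) * b)) := by
      simp only [u]; push_cast; field_simp; ring
    rw [hdiff, gridWeight]
    exact div_le_div_of_nonneg_left (by positivity) (by positivity) (by nlinarith)
  calc ∑ k ∈ range n, gridWeight a b k ≤ ∑ k ∈ range n, (u k - u (k + 1)) :=
        sum_le_sum fun k _ => telescope k
    _ = 1 - u n := by rw [sum_range_sub']; simp [u, ha.ne']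
    _ ≤ 1 := by simp only [u]; linarith [show 0 ≤ a / (a + n * b) by positivity]

lemma log_two_div_mul_gridWeight_le {a b δ ℓ : ℝ} (ha : 0 < a) (hb : 0 < b) (hδ : 0 < δ)
    {k : ℕ} (hk : k * b ≤ ℓ) :
    log (2 / (δ * gridWeight a b k)) ≤ log (1 / δ) + log ((a + b + ℓ) ^ 2 / (0.5 * a * b)) := by
  have hsplit : 2 / (δ * gridWeight a b k) = 1 / δ * ((a + (k + 1) * b) ^ 2 / (0.5 * a * b)) := by
    rw [gridWeight]; field_simp; ring
  rw [hsplit, log_mul (by positivity) (by positivity)]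
  gcongr log (1 / δ) + log (?_ ^ 2 / _)
  linarith

lemma psi_bound_of_logWealthBound_lt {α δ a Z S : ℝ} {k : ℕ} (hα0 : 0 < α) (hα1 : α < 1)
    (hδ : 0 < δ) (ha : 0 < a) (hS : 0 < S) (hZ : 0 < Z)
    (hlo : α ^ (k + 1) < Z / (S + Z)) (hhi : Z / (S + Z) ≤ α ^ k)
    (hwealth : logWealthBound Z S (α ^ (k + 1)) < log (2 / (δ * gridWeight a (log (1 / α)) k))) :
    α * (Z / S - log (1 + Z / S)) * S
      ≤ log (1 / δ) + log ((a + log (1 / α) + log (1 + S / Z)) ^ 2 / (0.5 * a * log (1 / α))) := by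
  have hb : 0 < log (1 / α) := log_pos ((one_lt_div hα0).2 hα1)
  have hbet : α * (Z / S - log (1 + Z / S)) * S ≤ logWealthBound Z S (α ^ (k + 1)) :=
    mul_psi_mul_le_logWealthBound hα0.le hS hZ (by rw [pow_succ']; gcongr) hlo.le
  have hk : k * log (1 / α) ≤ log (1 + S / Z) := by
    have h := log_le_log (by positivity) hhi
    have hinv : 1 + S / Z = (Z / (S + Z))⁻¹ := by field_simp; ring
    rw [log_pow, ← neg_le_neg_iff, ← log_inv, ← hinv] at h
    rw [one_div, log_inv]
    linarith
  linarith [log_two_div_mul_gridWeight_le ha hb hδ hk]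

lemma psi_bound_of_forall_prod_lt {α δ a : ℝ} (hα0 : 0 < α) (hα1 : α < 1) (hδ : 0 < δ)
    (ha : 0 < a) {y : ℕ → ℝ} (hy : ∀ i, |y i| ≤ 1) {t : ℕ}
    (hwealth : ∀ k : ℕ, ∀ σ ∈ ({1, -1} : Set ℝ), ∏ i ∈ range t, (1 + σ * α ^ (k + 1) * y i)
      < 2 / (δ * gridWeight a (log (1 / α)) k))
    (hZ : ∑ i ∈ range t, y i ≠ 0) :
    α * (|∑ i ∈ range t, y i| / ∑ i ∈ range t, y i ^ 2
        - log (1 + |∑ i ∈ range t, y i| / ∑ i ∈ range t, y i ^ 2)) * ∑ i ∈ range t, y i ^ 2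
      ≤ log (1 / δ) + log ((a + log (1 / α)
          + log (1 + (∑ i ∈ range t, y i ^ 2) / |∑ i ∈ range t, y i|)) ^ 2
            / (0.5 * a * log (1 / α))) := by
  set Z := ∑ i ∈ range t, y i
  set S := ∑ i ∈ range t, y i ^ 2
  have hS : 0 < S := by
    refine (sum_nonneg fun i _ => sq_nonneg (y i)).lt_of_ne fun hS0 => hZ ?_
    have := (sum_eq_zero_iff_of_nonneg fun i _ => sq_nonneg (y i)).1 hS0.symm
    exact sum_eq_zero fun i hi => pow_eq_zero_iff two_ne_zero |>.1 (this i hi)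
  have hz : 0 < |Z| := abs_pos.2 hZ
  obtain ⟨k, hlo, hhi⟩ := exists_nat_pow_near_of_lt_one (x := |Z| / (S + |Z|))
    (by positivity) ((div_le_one (by positivity)).2 (by linarith)) hα0 hα1
  obtain ⟨σ, hσ, hσZ⟩ : ∃ σ ∈ ({1, -1} : Set ℝ), σ * Z = |Z| := by
    rcases abs_choice Z with h | h
    · exact ⟨1, by simp, by simp [h]⟩
    · exact ⟨-1, by simp, by simp [h]⟩
  have hσ1 : |σ| = 1 := by rcases hσ with rfl | rfl <;> norm_num
  have hsum : ∑ i ∈ range t, σ * y i = |Z| := by rw [← mul_sum, hσZ]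
  have hsq : ∑ i ∈ range t, (σ * y i) ^ 2 = S := by
    simp only [mul_pow, ← sq_abs σ, hσ1, one_pow, one_mul, S]
  have hlow := exp_logWealthBound_le_prod (s := range t) (y := fun i => σ * y i)
    (fun i _ => by rw [abs_mul, hσ1, one_mul]; exact hy i) (pow_nonneg hα0.le (k + 1))
    (pow_lt_one₀ hα0.le hα1 k.succ_ne_zero)
  rw [hsum, hsq] at hlow
  refine psi_bound_of_logWealthBound_lt hα0 hα1 hδ ha hS hz hlo hhi ?_
  have hw := gridWeight_pos ha (log_pos ((one_lt_div hα0).2 hα1)) k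
  rw [lt_log_iff_exp_lt (by positivity)]
  exact hlow.trans_lt (lt_of_eq_of_lt (prod_congr rfl fun i _ => by ring) (hwealth k σ hσ))

lemma MeasureTheory.Martingale.ville_ineq {Ω : Type*} {m0 : MeasurableSpace Ω} {μ : Measure Ω}
    [IsFiniteMeasure μ] {ℱ : Filtration ℕ m0} {f : ℕ → Ω → ℝ} (hf : Martingale f ℱ μ)
    (hnonneg : 0 ≤ f) {r : ℝ} (hr : 0 < r) :
    μ {ω | ∃ t, r ≤ f t ω} ≤ ENNReal.ofReal (μ[f 0] / r) := by
  set A : ℕ → Set Ω := fun n =>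
    {ω | (r.toNNReal : ℝ) ≤ (range (n + 1)).sup' nonempty_range_add_one fun k => f k ω}
  have hA : ∀ n, A n = {ω | ∃ t ∈ range (n + 1), r ≤ f t ω} := fun n => by
    ext ω; simp [A, le_sup'_iff, Real.coe_toNNReal r hr.le]
  have hmono : Monotone A := by
    intro m n hmn ω
    simp only [hA, Set.mem_ofPred_eq]
    exact fun ⟨t, ht, h⟩ => ⟨t, range_subset_range.2 (by omega) ht, h⟩
  have hunion : {ω | ∃ t, r ≤ f t ω} = ⋃ n, A n := by
    ext ω; simp only [hA, Set.mem_iUnion, Set.mem_ofPred_eq, mem_range]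
    exact ⟨fun ⟨t, h⟩ => ⟨t, t, by omega, h⟩, fun ⟨_, t, _, h⟩ => ⟨t, h⟩⟩
  rw [hunion, hmono.measure_iUnion]
  refine iSup_le fun n => ?_
  have hint : ∫ ω in A n, f n ω ∂μ ≤ μ[f 0] := by
    calc ∫ ω in A n, f n ω ∂μ ≤ μ[f n] :=
          setIntegral_le_integral (hf.integrable n) (Filter.Eventually.of_forall (hnonneg n))
      _ = μ[f 0] := by
          simpa using (hf.setIntegral_eq (Nat.zero_le n) MeasurableSet.univ).symm
  rw [ENNReal.ofReal_div_of_pos hr, ENNReal.le_div_iff_mul_le (by simp [hr]) (by simp),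
    mul_comm]
  exact (maximal_ineq hf.submartingale hnonneg n).trans (ENNReal.ofReal_le_ofReal hint)

lemma one_add_mul_mem_Icc {e y : ℝ} (he : |e| ≤ 1) (hy : |y| ≤ 1) :
    1 + e * y ∈ Set.Icc 0 2 := by
  have := abs_le.1 (abs_mul e y ▸ mul_le_one₀ he (abs_nonneg y) hy)
  constructor <;> linarith

section BettingWealth

variable {Ω : Type*} {m0 : MeasurableSpace Ω} {μ : Measure Ω} {ℱ : Filtration ℕ m0}
  {g : ℕ → Ω → ℝ} {e : ℝ}

noncomputable def bettingWealth (e : ℝ) (g : ℕ → Ω → ℝ) (t : ℕ) (ω : Ω) : ℝ :=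
  ∏ i ∈ range t, (1 + e * g (i + 1) ω)

lemma bettingWealth_succ_sub (t : ℕ) :
    bettingWealth e g (t + 1) - bettingWealth e g t = e • (bettingWealth e g t * g (t + 1)) := by
  ext ω
  simp only [bettingWealth, prod_range_succ, Pi.sub_apply, Pi.smul_apply, Pi.mul_apply,
    smul_eq_mul]
  ring

lemma bettingWealth_nonneg (he : |e| ≤ 1) (hg : ∀ t ω, |g (t + 1) ω| ≤ 1) (t : ℕ) :
    0 ≤ bettingWealth e g t := fun ω =>
  prod_nonneg fun i _ => (one_add_mul_mem_Icc he (hg i ω)).1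

lemma abs_bettingWealth_le (he : |e| ≤ 1) (hg : ∀ t ω, |g (t + 1) ω| ≤ 1) (t : ℕ) (ω : Ω) :
    |bettingWealth e g t ω| ≤ 2 ^ t := by
  rw [abs_of_nonneg (bettingWealth_nonneg he hg t ω)]
  calc bettingWealth e g t ω ≤ ∏ _i ∈ range t, (2 : ℝ) :=
        prod_le_prod (fun i _ => (one_add_mul_mem_Icc he (hg i ω)).1)
          fun i _ => (one_add_mul_mem_Icc he (hg i ω)).2
    _ = 2 ^ t := by simp

lemma stronglyAdapted_bettingWealth (hgm : ∀ t, StronglyMeasurable[ℱ (t + 1)] (g (t + 1))) :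
    StronglyAdapted ℱ (bettingWealth e g) := fun t => by
  have : bettingWealth e g t = ∏ i ∈ range t, fun ω => 1 + e * g (i + 1) ω := by
    ext ω; simp [bettingWealth]
  rw [this]
  exact Finset.stronglyMeasurable_prod _ fun i hi =>
    stronglyMeasurable_const.add (stronglyMeasurable_const.mul
      ((hgm i).mono (ℱ.mono (mem_range.1 hi))))

lemma martingale_bettingWealth [IsFiniteMeasure μ] (he : |e| ≤ 1)
    (hgm : ∀ t, StronglyMeasurable[ℱ (t + 1)] (g (t + 1))) (hg : ∀ t ω, |g (t + 1) ω| ≤ 1)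
    (hmds : ∀ t, μ[g (t + 1) | ℱ t] =ᵐ[μ] 0) : Martingale (bettingWealth e g) ℱ μ := by
  have hW := stronglyAdapted_bettingWealth (e := e) hgm
  have hWint (t : ℕ) : Integrable (bettingWealth e g t) μ :=
    .of_bound ((hW t).mono (ℱ.le t)).aestronglyMeasurable _
      (.of_forall (abs_bettingWealth_le he hg t))
  have hgint (t : ℕ) : Integrable (g (t + 1)) μ :=
    .of_bound ((hgm t).mono (ℱ.le _)).aestronglyMeasurable 1 (.of_forall (hg t))
  refine martingale_of_condExp_sub_eq_zero_nat hW hWint fun t => ?_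
  have hprod : Integrable (bettingWealth e g t * g (t + 1)) μ :=
    .of_bound (((hW t).mono (ℱ.le t)).mul ((hgm t).mono (ℱ.le _))).aestronglyMeasurable (2 ^ t)
      (.of_forall fun ω => by
        rw [Pi.mul_apply, Real.norm_eq_abs, abs_mul]
        exact (mul_le_of_le_one_right (abs_nonneg _) (hg t ω)).trans
          (abs_bettingWealth_le he hg t ω))
  rw [bettingWealth_succ_sub]
  filter_upwards [condExp_smul e (bettingWealth e g t * g (t + 1)) (ℱ t),
    condExp_mul_of_stronglyMeasurable_left (hW t) hprod (hgint t), hmds t] with ω h1 h2 h3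
  simp [h1, h2, h3]

lemma measure_exists_le_bettingWealth_le [IsProbabilityMeasure μ] (he : |e| ≤ 1)
    (hgm : ∀ t, StronglyMeasurable[ℱ (t + 1)] (g (t + 1))) (hg : ∀ t ω, |g (t + 1) ω| ≤ 1)
    (hmds : ∀ t, μ[g (t + 1) | ℱ t] =ᵐ[μ] 0) {r : ℝ} (hr : 0 < r) :
    μ {ω | ∃ t, r ≤ bettingWealth e g t ω} ≤ ENNReal.ofReal (1 / r) := by
  simpa [bettingWealth] using
    (martingale_bettingWealth he hgm hg hmds).ville_ineq (bettingWealth_nonneg he hg) hr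

lemma measure_exists_le_signed_bettingWealth_le [IsProbabilityMeasure μ]
    (hgm : ∀ t, StronglyMeasurable[ℱ (t + 1)] (g (t + 1))) (hg : ∀ t ω, |g (t + 1) ω| ≤ 1)
    (hmds : ∀ t, μ[g (t + 1) | ℱ t] =ᵐ[μ] 0) {lam w : ℕ → ℝ} (hlam : ∀ k, |lam k| ≤ 1)
    (hw : ∀ k, 0 < w k) (hsum : ∀ n, ∑ k ∈ range n, w k ≤ 1) {δ : ℝ} (hδ : 0 < δ) :
    μ {ω | ∃ k, ∃ σ ∈ ({1, -1} : Set ℝ), ∃ t, 2 / (δ * w k) ≤ bettingWealth (σ * lam k) g t ω}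
      ≤ ENNReal.ofReal δ := by
  set E : ℕ → ℝ → Set Ω := fun k σ => {ω | ∃ t, 2 / (δ * w k) ≤ bettingWealth (σ * lam k) g t ω}
  have hE (k : ℕ) (σ : ℝ) (hσ : |σ| = 1) : μ (E k σ) ≤ ENNReal.ofReal (δ * w k / 2) := by
    have hwk := hw k
    simpa only [one_div_div] using measure_exists_le_bettingWealth_le (μ := μ)
      (by rw [abs_mul, hσ, one_mul]; exact hlam k) hgm hg hmds (r := 2 / (δ * w k)) (by positivity)
  have hunion : {ω | ∃ k, ∃ σ ∈ ({1, -1} : Set ℝ), ∃ t, 2 / (δ * w k)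
      ≤ bettingWealth (σ * lam k) g t ω} = ⋃ k, (E k 1 ∪ E k (-1)) := by
    ext ω; simp [E]
  rw [hunion]
  calc μ (⋃ k, (E k 1 ∪ E k (-1))) ≤ ∑' k, ENNReal.ofReal (δ * w k) := by
        refine (measure_iUnion_le _).trans (ENNReal.tsum_le_tsum fun k => ?_)
        have hδw : 0 ≤ δ * w k / 2 := by have := hw k; positivity
        calc μ (E k 1 ∪ E k (-1)) ≤ μ (E k 1) + μ (E k (-1)) := measure_union_le _ _
          _ ≤ ENNReal.ofReal (δ * w k / 2) + ENNReal.ofReal (δ * w k / 2) :=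
            add_le_add (hE k 1 (by simp)) (hE k (-1) (by simp))
          _ = ENNReal.ofReal (δ * w k) := by rw [← ENNReal.ofReal_add hδw hδw, add_halves]
    _ ≤ ENNReal.ofReal δ := by
        refine ENNReal.tsum_le_of_sum_range_le fun n => ?_
        rw [← ENNReal.ofReal_sum_of_nonneg fun k _ => mul_nonneg hδ.le (hw k).le, ← mul_sum]
        exact ENNReal.ofReal_le_ofReal (mul_le_of_le_one_right hδ.le (hsum n))

end BettingWealth

-- Clipping to `[-1, 1]`: the wealth must be nonnegative everywhere, not only a.e., for Doob's
-- maximal inequality.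
lemma exists_abs_le_one_mds_ae_eq {Ω : Type*} {m0 : MeasurableSpace Ω} {μ : Measure Ω}
    {ℱ : Filtration ℕ m0} {g : ℕ → Ω → ℝ}
    (hgm : ∀ t, StronglyMeasurable[ℱ (t + 1)] (g (t + 1)))
    (hg : ∀ t, ∀ᵐ ω ∂μ, |g (t + 1) ω| ≤ 1) (hmds : ∀ t, μ[g (t + 1) | ℱ t] =ᵐ[μ] 0) :
    ∃ h : ℕ → Ω → ℝ, (∀ t, StronglyMeasurable[ℱ (t + 1)] (h (t + 1))) ∧
      (∀ t ω, |h (t + 1) ω| ≤ 1) ∧ (∀ t, μ[h (t + 1) | ℱ t] =ᵐ[μ] 0) ∧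
      ∀ᵐ ω ∂μ, ∀ t, h (t + 1) ω = g (t + 1) ω := by
  set h : ℕ → Ω → ℝ := fun t ω => max (-1) (min 1 (g t ω))
  have hae (t : ℕ) : h (t + 1) =ᵐ[μ] g (t + 1) := by
    filter_upwards [hg t] with ω hω
    simp [h, abs_le.1 hω]
  refine ⟨h, fun t => ?_, fun t ω => ?_, fun t => (condExp_congr_ae (hae t)).trans (hmds t),
    ae_all_iff.2 hae⟩
  · exact (continuous_const.max (continuous_const.min continuous_id)).comp_stronglyMeasurable
      (hgm t)
  · exact abs_le.2 ⟨le_max_left _ _, max_le (by norm_num) (min_le_left _ _)⟩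

lemma ofReal_one_sub_le_measure {Ω : Type*} {m0 : MeasurableSpace Ω} {μ : Measure Ω}
    [IsProbabilityMeasure μ] {s : Set Ω} {δ : ℝ} (hδ : 0 ≤ δ) (hs : μ sᶜ ≤ ENNReal.ofReal δ) :
    ENNReal.ofReal (1 - δ) ≤ μ s := by
  rw [ENNReal.ofReal_sub 1 hδ, ENNReal.ofReal_one, tsub_le_iff_right]
  calc 1 = μ Set.univ := measure_univ.symm
    _ ≤ μ s + μ sᶜ := measure_univ_le_add_compl s
    _ ≤ μ s + ENNReal.ofReal δ := by gcongr

/-- Time-uniform concentration from the betting wealth bound: for a martingale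
difference sequence `(g_{t+1})` with `|g_{t+1}| ≤ 1` a.s., with probability at least
`1 − δ`, simultaneously for all `t ≥ 1` with `Σ_{i<t} g_{i+1} ≠ 0`, writing
`S_t = Σ_{i<t} g_{i+1}²` and `Ψ(x) = x − log(1+x)`:
`α·Ψ(|Σ g|/S_t)·S_t ≤ log(1/δ)
  + log((log γ + log(1/α) + log(1 + S_t/|Σ g|))²/(0.5·log γ·log(1/α)))`. -/
theorem time_uniform_concentration {Ω : Type*} {m0 : MeasurableSpace Ω}
    {μ : Measure Ω} [IsProbabilityMeasure μ] (ℱ : Filtration ℕ m0)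
    (γ α δ : ℝ) (hγ : 1 < γ) (hα : α ∈ Set.Ioo (0 : ℝ) 1) (hδ : δ ∈ Set.Ioo (0 : ℝ) 1)
    (g : ℕ → Ω → ℝ)
    (hgadapted : ∀ t, StronglyMeasurable[ℱ (t + 1)] (g (t + 1)))
    (hgbdd : ∀ t, ∀ᵐ ω ∂μ, |g (t + 1) ω| ≤ 1)
    (hmds : ∀ t, μ[g (t + 1) | ℱ t] =ᵐ[μ] 0) :
    ENNReal.ofReal (1 - δ) ≤
      μ {ω | ∀ t : ℕ, 1 ≤ t →
          ∀ Z S : ℝ, Z = ∑ i ∈ Finset.range t, g (i + 1) ω →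
            S = ∑ i ∈ Finset.range t, (g (i + 1) ω) ^ 2 →
            Z ≠ 0 →
            α * (|Z| / S - Real.log (1 + |Z| / S)) * S
              ≤ Real.log (1 / δ)
                + Real.log ((Real.log γ + Real.log (1 / α)
                      + Real.log (1 + S / |Z|)) ^ 2
                    / (0.5 * Real.log γ * Real.log (1 / α)))} := by
  obtain ⟨hα0, hα1⟩ := hα
  have ha : 0 < log γ := log_pos hγ
  have hb : 0 < log (1 / α) := log_pos ((one_lt_div hα0).2 hα1)
  obtain ⟨h, hhm, hh, hhmds, hhg⟩ := exists_abs_le_one_mds_ae_eq hgadapted hgbdd hmds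
  have hbad := measure_exists_le_signed_bettingWealth_le hhm hh hhmds (lam := fun k => α ^ (k + 1))
    (fun k => by rw [abs_of_pos (by positivity)]; exact pow_le_one₀ hα0.le hα1.le)
    (gridWeight_pos ha hb) (sum_range_gridWeight_le_one ha hb) hδ.1
  refine ofReal_one_sub_le_measure hδ.1.le ((measure_mono_ae ?_).trans hbad)
  filter_upwards [hhg] with ω hω hωs
  by_contra hB
  refine hωs fun t _ Z S hZdef hSdef hZ => ?_
  subst hZdef hSdef
  simp only [← hω] at hZ ⊢
  exact psi_bound_of_forall_prod_lt hα0 hα1 hδ.1 ha (fun i => hh i ω)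
    (fun k σ hσ => lt_of_not_ge fun hle => hB ⟨k, σ, hσ, t, hle⟩) hZ
end
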